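/- arXiv:math/0409523 — 2 statements merged into one kernel-verified Lean document; each statement's English description precedes it below -/
import Mathlib

section
/- Let n, k be positive integers with k ≤ n-1, and let n' be the largest divisor of n(n-k) coprime to k!. Write n' = p_1^{e_1} ⋯ p_r^{e_r} with distinct primes p_i and set d = gcd(k, e_1, …, e_r) (with d = k if n' = 1). Let f(x) = ∑_{j=0}^{k} a_j c_j x^j where c_j = (-1)^{k-j} C(n,j) C(n-j-1,k-j) and each a_j is a nonzero integer with all prime factors ≤ k. Then every irreducible factor of f over ℚ has degree divisible by k/d. -/
/-!
Fix a prime `p ∣ n'`. Then `p > k`, and since `p` cannot divide both `n` and `n - k`, the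
`p`-adic valuation of the `j`-th coefficient of `f` is `0` at one end (`j = 0` if `p ∣ n`,
`j = k` if `p ∣ n - k`) and `E = v_p(n(n - k))` at every other index, the `a_j` being `p`-adic
units. So the Newton polygon of `f` at `p` is a single edge of slope `±E/k`: for a root `α` of an
irreducible factor `g` and a prime `𝔓 ∣ p` of `ℚ(α)` with ramification index `e`, the strong
triangle inequality forces `k · v_𝔓(α) = ±eE`. Hence `k ∣ eE` for every `𝔓`, and
`∑ e_𝔓 f_𝔓 = deg g` gives `k ∣ E · deg g`. Maximality of `n'` gives `E = v_p(n')`, so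
`k ∣ gcd(k, e_1, …, e_r) · deg g`, i.e. `k / d ∣ deg g`.
-/

open Finset Polynomial WithZero IsDedekindDomain NumberField

theorem Nat.eq_of_dvd_of_dvd_of_lt_add {p a b : ℕ} (ha : p ∣ a) (hb : p ∣ b) (hab : a < b + p)
    (hba : b < a + p) : a = b := by
  rcases le_total a b with h | h
  · have := Nat.eq_zero_of_dvd_of_lt (Nat.dvd_sub hb ha) (by omega)
    omega
  · have := Nat.eq_zero_of_dvd_of_lt (Nat.dvd_sub ha hb) (by omega)
    omega

theorem Nat.factorization_choose_eq_sum {p x r : ℕ} (hp : p.Prime) (hrp : r < p) (hrx : r ≤ x) :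
    (x.choose r).factorization p = ∑ i ∈ range r, (x - i).factorization p := by
  have hfact : r.factorial.factorization p = 0 :=
    Nat.factorization_eq_zero_of_not_dvd fun h => by
      have := (hp.dvd_factorial).mp h
      omega
  have := congrArg (·.factorization p) (Nat.descFactorial_eq_factorial_mul_choose x r)
  rw [Nat.descFactorial_eq_prod_range, Nat.factorization_prod fun i hi => by
      have := Finset.mem_range.mp hi; omega,
    Nat.factorization_mul (Nat.factorial_ne_zero r) (Nat.choose_pos hrx).ne'] at this
  simpa [hfact] using this.symm

theorem Nat.factorization_choose_eq_zero {p x r : ℕ} (hp : p.Prime) (hrp : r < p) (hrx : r ≤ x)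
    (h : ∀ i < r, ¬ p ∣ x - i) : (x.choose r).factorization p = 0 := by
  rw [Nat.factorization_choose_eq_sum hp hrp hrx]
  exact Finset.sum_eq_zero fun i hi =>
    Nat.factorization_eq_zero_of_not_dvd (h i (Finset.mem_range.mp hi))

theorem Nat.factorization_choose_of_dvd_sub {p x r i₀ : ℕ} (hp : p.Prime) (hrp : r < p)
    (hrx : r ≤ x) (hi₀ : i₀ < r) (hdvd : p ∣ x - i₀) :
    (x.choose r).factorization p = (x - i₀).factorization p := by
  rw [Nat.factorization_choose_eq_sum hp hrp hrx,
    Finset.sum_eq_single_of_mem i₀ (Finset.mem_range.mpr hi₀)]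
  intro i hi hne
  have := Finset.mem_range.mp hi
  refine Nat.factorization_eq_zero_of_not_dvd fun h => hne ?_
  have := Nat.eq_of_dvd_of_dvd_of_lt_add h hdvd (by omega) (by omega)
  omega

section Coefficients

variable {n k p j : ℕ}

theorem factorization_choose_mul_choose_of_dvd_left (hp : p.Prime) (hkp : k < p) (hkn : k < n)
    (hpn : p ∣ n) (hj : j ≤ k) :
    (n.choose j * (n - j - 1).choose (k - j)).factorization p =
      if j = 0 then 0 else n.factorization p := by
  have hright : ((n - j - 1).choose (k - j)).factorization p = 0 :=
    Nat.factorization_choose_eq_zero hp (by omega) (by omega) fun i hi h => by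
      have := Nat.eq_of_dvd_of_dvd_of_lt_add h hpn (by omega) (by omega)
      omega
  rw [Nat.factorization_mul (Nat.choose_pos (by omega)).ne' (Nat.choose_pos (by omega)).ne',
    Finsupp.add_apply, hright, add_zero]
  split_ifs with hj0
  · simp [hj0]
  · simpa using Nat.factorization_choose_of_dvd_sub hp (by omega) (by omega)
      (Nat.pos_of_ne_zero hj0) (by simpa using hpn)

theorem factorization_choose_mul_choose_of_dvd_right (hp : p.Prime) (hkp : k < p) (hkn : k < n)
    (hpnk : p ∣ n - k) (hj : j ≤ k) :
    (n.choose j * (n - j - 1).choose (k - j)).factorization p =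
      if j = k then 0 else (n - k).factorization p := by
  have hleft : (n.choose j).factorization p = 0 :=
    Nat.factorization_choose_eq_zero hp (by omega) (by omega) fun i hi h => by
      have := Nat.eq_of_dvd_of_dvd_of_lt_add h hpnk (by omega) (by omega)
      omega
  rw [Nat.factorization_mul (Nat.choose_pos (by omega)).ne' (Nat.choose_pos (by omega)).ne',
    Finsupp.add_apply, hleft, zero_add]
  split_ifs with hjk
  · simp [hjk]
  · rw [Nat.factorization_choose_of_dvd_sub hp (by omega) (by omega) (i₀ := k - j - 1)
      (by omega) (by rwa [show n - j - 1 - (k - j - 1) = n - k by omega])]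
    congr 2
    omega

theorem exists_factorization_choose_mul_choose (hp : p.Prime) (hk : 1 ≤ k) (hkp : k < p)
    (hkn : k < n) (hpN : p ∣ n * (n - k)) :
    ∃ js, (js = 0 ∨ js = k) ∧ ∀ j ≤ k,
      (n.choose j * (n - j - 1).choose (k - j)).factorization p =
        if j = js then 0 else (n * (n - k)).factorization p := by
  have hN := Nat.factorization_mul (a := n) (b := n - k) (by omega) (by omega)
  have not_both (hpn : p ∣ n) (hpnk : p ∣ n - k) : False := by
    have := Nat.eq_of_dvd_of_dvd_of_lt_add hpnk hpn (by omega) (by omega)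
    omega
  rcases (Nat.Prime.dvd_mul hp).mp hpN with hpn | hpnk
  · refine ⟨0, .inl rfl, fun j hj => ?_⟩
    rw [factorization_choose_mul_choose_of_dvd_left hp hkp hkn hpn hj, hN, Finsupp.add_apply,
      Nat.factorization_eq_zero_of_not_dvd fun h => not_both hpn h, add_zero]
  · refine ⟨k, .inr rfl, fun j hj => ?_⟩
    rw [factorization_choose_mul_choose_of_dvd_right hp hkp hkn hpnk hj, hN, Finsupp.add_apply,
      Nat.factorization_eq_zero_of_not_dvd fun h => not_both h hpnk, zero_add]

end Coefficients

theorem Nat.factorization_eq_of_forall_dvd_coprime_le {N m n' q : ℕ} (hN : N ≠ 0)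
    (hdvd : n' ∣ N) (hcop : n'.Coprime m) (hmax : ∀ m', m' ∣ N → m'.Coprime m → m' ≤ n')
    (hq : q.Prime) (hqm : q.Coprime m) : n'.factorization q = N.factorization q := by
  have hn' : n' ≠ 0 := by rintro rfl; exact hN (zero_dvd_iff.mp hdvd)
  have hle := (Nat.factorization_le_iff_dvd hn' hN).mpr hdvd
  refine (hle q).antisymm (not_lt.mp fun hlt => ?_)
  have hmul : n' * q ∣ N := by
    rw [← Nat.factorization_le_iff_dvd (Nat.mul_ne_zero hn' hq.ne_zero) hN,
      Nat.factorization_mul hn' hq.ne_zero, hq.factorization]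
    intro r
    rw [Finsupp.add_apply, Finsupp.single_apply]
    split_ifs with hr
    · subst hr; omega
    · simpa using hle r
  have := hmax _ hmul (hcop.mul_left hqm)
  have := hq.two_le
  have : 0 < n' := Nat.pos_of_ne_zero hn'
  nlinarith

theorem Nat.div_gcd_dvd_of_forall_dvd_mul {ι : Type*} {k m : ℕ} (hk : k ≠ 0) {s : Finset ι}
    {E : ι → ℕ} (h : ∀ q ∈ s, k ∣ E q * m) : k / k.gcd (s.gcd E) ∣ m := by
  rw [Nat.div_dvd_iff_dvd_mul (Nat.gcd_dvd_left _ _)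
    (Nat.gcd_pos_of_pos_left _ (Nat.pos_of_ne_zero hk)), ← Nat.gcd_mul_right]
  refine Nat.dvd_gcd (dvd_mul_right k m) ?_
  rw [← normalize_eq m, ← Finset.gcd_mul_right]
  exact Finset.dvd_gcd h

theorem Valuation.exists_ne_le_of_sum_eq_zero {R Γ₀ ι : Type*} [Ring R]
    [LinearOrderedCommGroupWithZero Γ₀] [DecidableEq ι] (v : Valuation R Γ₀) {s : Finset ι}
    {f : ι → R} (hf : ∑ i ∈ s, f i = 0) {j : ι} (hj : j ∈ s) (hfj : v (f j) ≠ 0) :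
    ∃ i ∈ s, i ≠ j ∧ v (f j) ≤ v (f i) := by
  by_contra! h
  have := v.map_sum_eq_of_lt hj fun i hi => by
    rw [Finset.mem_sdiff, Finset.mem_singleton] at hi
    exact h i hi.1 hi.2
  rw [hf, map_zero] at this
  exact hfj this.symm

/-- `j * t - [j ≠ js] * c` is the logarithm of the valuation of the `j`-th term `z_j α ^ j` when
`log v(α) = t`. Since the terms sum to zero, no term is the unique largest one, and this pins down
`k * t = ± c`: the Newton polygon has a single edge. -/
theorem dvd_of_not_unique_argmax {k : ℕ} (hk : 1 ≤ k) {t c : ℤ} (hc : 0 ≤ c) {js : ℕ}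
    (hjs : js = 0 ∨ js = k)
    (h : ∀ j₀ ≤ k, ∃ j ≤ k, j ≠ j₀ ∧
      j₀ * t - (if j₀ = js then 0 else c) ≤ j * t - (if j = js then 0 else c)) :
    (k : ℤ) ∣ c := by
  obtain ⟨i, hik, hi0, hi⟩ := h 0 (Nat.zero_le k)
  obtain ⟨j, hjk, hjk', hj⟩ := h k le_rfl
  have hik' : (i : ℤ) ≤ k := by exact_mod_cast hik
  have hjk'' : (j : ℤ) < k := by exact_mod_cast lt_of_le_of_ne hjk hjk'
  have hi1 : (1 : ℤ) ≤ i := by exact_mod_cast Nat.one_le_iff_ne_zero.mpr hi0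
  have hj0 : (0 : ℤ) ≤ j := j.cast_nonneg
  rcases hjs with rfl | rfl
  · rw [if_pos rfl, if_neg hi0, Nat.cast_zero, zero_mul, sub_zero] at hi
    rw [if_neg (by omega)] at hj
    have ht : 0 ≤ t := by nlinarith
    refine ⟨t, le_antisymm (by nlinarith [mul_le_mul_of_nonneg_right hik' ht]) ?_⟩
    split_ifs at hj <;> nlinarith
  · rw [if_neg (by omega), Nat.cast_zero, zero_mul, zero_sub] at hi
    rw [if_pos rfl, if_neg hjk', sub_zero] at hj
    have ht : t ≤ 0 := by nlinarith
    refine ⟨-t, le_antisymm (by nlinarith [mul_nonpos_of_nonneg_of_nonpos hj0 ht]) ?_⟩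
    split_ifs at hi <;> nlinarith

theorem dvd_of_sum_mul_pow_eq_zero {L : Type*} [Field L] (w : Valuation L ℤᵐ⁰) {k : ℕ}
    (hk : 1 ≤ k) {c : ℤ} (hc : 0 ≤ c) {js : ℕ} (hjs : js = 0 ∨ js = k) {z : ℕ → L}
    (hz : ∀ j ≤ k, w (z j) = exp (-(if j = js then 0 else c))) {α : L}
    (hα : ∑ j ∈ range (k + 1), z j * α ^ j = 0) :
    (k : ℤ) ∣ c := by
  have hα0 : α ≠ 0 := by
    rintro rfl
    rw [Finset.sum_eq_single_of_mem 0 (by simp) fun j _ hj => by simp [hj], pow_zero,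
      mul_one] at hα
    have h0 := hz 0 (Nat.zero_le k)
    rw [hα, map_zero] at h0
    exact exp_ne_zero h0.symm
  have hterm : ∀ j ≤ k, w (z j * α ^ j) =
      exp (j * WithZero.log (w α) - if j = js then 0 else c) := by
    intro j hj
    rw [map_mul, map_pow, hz j hj, ← exp_log ((w.ne_zero_iff).mpr hα0), ← exp_nsmul, ← exp_add,
      log_exp, nsmul_eq_mul, neg_add_eq_sub]
  refine dvd_of_not_unique_argmax (t := WithZero.log (w α)) hk hc hjs fun j₀ hj₀ => ?_
  obtain ⟨j, hj, hne, hle⟩ := w.exists_ne_le_of_sum_eq_zero hα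
    (Finset.mem_range_succ_iff.mpr hj₀) (by simp [hterm j₀ hj₀])
  rw [Finset.mem_range_succ_iff] at hj
  exact ⟨j, hj, hne, by rwa [hterm j₀ hj₀, hterm j hj, exp_le_exp] at hle⟩

theorem IsDedekindDomain.HeightOneSpectrum.intValuation_eq_exp_neg_factorization {p : ℕ}
    (hp : p.Prime) (v : HeightOneSpectrum ℤ) (hv : v.asIdeal = Ideal.span {(p : ℤ)}) {z : ℤ}
    (hz : z ≠ 0) : v.intValuation z = exp (-(z.natAbs.factorization p : ℤ)) := by
  suffices h : ∀ m : ℕ, m ≠ 0 → v.intValuation m = exp (-(m.factorization p : ℤ)) by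
    obtain ⟨m, rfl | rfl⟩ := Int.eq_nat_or_neg z <;>
      simpa using h m (by simpa using hz)
  intro m hm
  have hunit : v.intValuation ((m / p ^ m.factorization p : ℕ) : ℤ) = 1 := by
    rw [HeightOneSpectrum.intValuation_eq_one_iff, hv, Ideal.mem_span_singleton,
      Int.natCast_dvd_natCast]
    exact Nat.not_dvd_ordCompl hp hm
  have hprime : v.intValuation (p : ℤ) = exp (-1) :=
    v.intValuation_singleton (by exact_mod_cast hp.ne_zero) hv
  conv_lhs => rw [← Nat.ordProj_mul_ordCompl_eq_self m p]
  rw [Nat.cast_mul, Nat.cast_pow, map_mul, map_pow, hunit, hprime, mul_one, ← exp_nsmul]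
  simp

theorem IsDedekindDomain.HeightOneSpectrum.valuation_intCast_of_liesOver {L : Type*} [Field L]
    [NumberField L] {p : ℕ} (hp : p.Prime) (v : HeightOneSpectrum ℤ)
    (hv : v.asIdeal = Ideal.span {(p : ℤ)}) (w : HeightOneSpectrum (𝓞 L))
    [w.asIdeal.LiesOver v.asIdeal] {z : ℤ} (hz : z ≠ 0) :
    w.valuation L z =
      exp (-(v.asIdeal.ramificationIdx' w.asIdeal * z.natAbs.factorization p : ℤ)) := by
  have := valuation_liesOver (K := ℚ) L v w (algebraMap ℤ ℚ z)
  rw [valuation_of_algebraMap, intValuation_eq_exp_neg_factorization hp v hv hz, ← exp_nsmul,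
    algebraMap_int_eq, eq_intCast, map_intCast] at this
  rw [← this, nsmul_eq_mul, mul_neg]

theorem dvd_mul_finrank_of_sum_mul_pow_eq_zero {L : Type*} [Field L] [NumberField L] {p : ℕ}
    (hp : p.Prime) {k E js : ℕ} (hk : 1 ≤ k) (hjs : js = 0 ∨ js = k) {z : ℕ → ℤ}
    (hz0 : ∀ j ≤ k, z j ≠ 0)
    (hzp : ∀ j ≤ k, (z j).natAbs.factorization p = if j = js then 0 else E) {α : L}
    (hα : ∑ j ∈ range (k + 1), (z j : L) * α ^ j = 0) :
    k ∣ E * Module.finrank ℚ L := by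
  have hprime : Prime (Ideal.span {(p : ℤ)}) :=
    (Ideal.prime_iff_isPrime (by simpa using hp.ne_zero)).mpr <|
      (Ideal.span_singleton_prime (by exact_mod_cast hp.ne_zero)).mpr
        (Nat.prime_iff_prime_int.mp hp)
  set v := HeightOneSpectrum.ofPrime hprime
  rw [← RingOfIntegers.rank, ← Ideal.sum_ramification_inertia_eq_finrank v.asIdeal, Finset.mul_sum]
  refine Finset.dvd_sum fun q _ => ?_
  rw [← mul_assoc]
  refine Dvd.dvd.mul_right ?_ _
  let w : HeightOneSpectrum (𝓞 L) :=
    ⟨q.1, inferInstance, Ideal.ne_bot_of_mem_primesOver v.ne_bot q.2⟩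
  rw [← Ideal.ramificationIdx'_eq_ramificationIdx v.asIdeal q.1 v.ne_bot]
  have := dvd_of_sum_mul_pow_eq_zero (w.valuation L) hk
    (c := v.asIdeal.ramificationIdx' w.asIdeal * E) (by positivity) hjs (z := fun j => (z j : L))
    (fun j hj => by
      rw [HeightOneSpectrum.valuation_intCast_of_liesOver hp v rfl w (hz0 j hj), hzp j hj]
      split_ifs <;> simp) hα
  rw [mul_comm]
  exact_mod_cast this

theorem dvd_mul_natDegree_of_dvd_sum_mul_pow {p : ℕ} (hp : p.Prime) {k E js : ℕ} (hk : 1 ≤ k)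
    (hjs : js = 0 ∨ js = k) {z : ℕ → ℤ} (hz0 : ∀ j ≤ k, z j ≠ 0)
    (hzp : ∀ j ≤ k, (z j).natAbs.factorization p = if j = js then 0 else E) {g : ℚ[X]}
    (hg : Irreducible g) (hgf : g ∣ ∑ j ∈ range (k + 1), C (z j : ℚ) * X ^ j) :
    k ∣ E * g.natDegree := by
  have : Fact (Irreducible g) := ⟨hg⟩
  let pb := AdjoinRoot.powerBasis hg.ne_zero
  have : FiniteDimensional ℚ (AdjoinRoot g) := pb.finite
  have : NumberField (AdjoinRoot g) := ⟨⟩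
  have hroot : aeval (AdjoinRoot.root g) (∑ j ∈ range (k + 1), C (z j : ℚ) * X ^ j) = 0 :=
    (AdjoinRoot.aeval_eq _).trans (AdjoinRoot.mk_eq_zero.mpr hgf)
  rw [← AdjoinRoot.powerBasis_dim hg.ne_zero, ← pb.finrank]
  refine dvd_mul_finrank_of_sum_mul_pow_eq_zero hp hk hjs hz0 hzp (α := AdjoinRoot.root g) ?_
  simpa using hroot

theorem dvd_factorization_mul_natDegree {n k p : ℕ} (hp : p.Prime) (hk : 1 ≤ k) (hkp : k < p)
    (hkn : k < n) (hpN : p ∣ n * (n - k)) {a : ℕ → ℤ} (ha0 : ∀ j ≤ k, a j ≠ 0)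
    (hap : ∀ j ≤ k, ¬ (p : ℤ) ∣ a j) {g : ℚ[X]} (hg : Irreducible g)
    (hgf : g ∣ ∑ j ∈ Finset.range (k + 1),
        C ((a j : ℚ) * ((-1 : ℚ) ^ (k - j) * (n.choose j : ℚ) *
          ((n - j - 1).choose (k - j) : ℚ))) * X ^ j) :
    k ∣ (n * (n - k)).factorization p * g.natDegree := by
  obtain ⟨js, hjs, hprofile⟩ := exists_factorization_choose_mul_choose hp hk hkp hkn hpN
  set z : ℕ → ℤ := fun j => a j * ((-1) ^ (k - j) * n.choose j * (n - j - 1).choose (k - j))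
  have hchoose (j : ℕ) (hj : j ≤ k) : n.choose j * (n - j - 1).choose (k - j) ≠ 0 :=
    Nat.mul_ne_zero (Nat.choose_pos (by omega)).ne' (Nat.choose_pos (by omega)).ne'
  have hz0 (j : ℕ) (hj : j ≤ k) : z j ≠ 0 := by
    simpa [z, ha0 j hj, Nat.choose_eq_zero_iff] using hchoose j hj
  have hzp (j : ℕ) (hj : j ≤ k) :
      (z j).natAbs.factorization p = if j = js then 0 else (n * (n - k)).factorization p := by
    have habs : (z j).natAbs = (a j).natAbs * (n.choose j * (n - j - 1).choose (k - j)) := by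
      simp [z, Int.natAbs_mul, mul_assoc]
    rw [← hprofile j hj, habs, Nat.factorization_mul (by simpa using ha0 j hj) (hchoose j hj),
      Finsupp.add_apply, Nat.factorization_eq_zero_of_not_dvd fun h => hap j hj
        (Int.natCast_dvd.mpr h), zero_add]
  refine dvd_mul_natDegree_of_dvd_sum_mul_pow hp hk hjs hz0 hzp hg ?_
  convert hgf using 3 with j
  simp only [z]
  push_cast
  ring

open Polynomial in
theorem irreducible_factor_degree_dvd_general (n k : ℕ) (hk : 1 ≤ k) (hkn : k ≤ n - 1)
    (n' : ℕ) (hn'dvd : n' ∣ n * (n - k)) (hn'cop : Nat.Coprime n' (Nat.factorial k))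
    (hn'max : ∀ m : ℕ, m ∣ n * (n - k) → Nat.Coprime m (Nat.factorial k) → m ≤ n')
    (d : ℕ) (hd : d = Nat.gcd k (n'.primeFactors.gcd fun p => n'.factorization p))
    (a : ℕ → ℤ) (ha0 : ∀ j ≤ k, a j ≠ 0)
    (ha : ∀ j ≤ k, ∀ q : ℕ, q.Prime → (q : ℤ) ∣ a j → q ≤ k) :
    ∀ g : ℚ[X], Irreducible g →
      g ∣ (∑ j ∈ Finset.range (k + 1),
        C ((a j : ℚ) * ((-1 : ℚ) ^ (k - j) * (n.choose j : ℚ) *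
          ((n - j - 1).choose (k - j) : ℚ))) * X ^ j) →
      k / d ∣ g.natDegree := by
  intro g hg hgf
  subst hd
  refine Nat.div_gcd_dvd_of_forall_dvd_mul (by omega) fun q hq => ?_
  have hqp := Nat.prime_of_mem_primeFactors hq
  have hqn' := Nat.dvd_of_mem_primeFactors hq
  have hqk : q.Coprime k.factorial := hn'cop.coprime_dvd_left hqn'
  have hkq : k < q := not_le.mp fun h =>
    (Nat.Prime.coprime_iff_not_dvd hqp).mp hqk (Nat.dvd_factorial hqp.pos h)
  rw [Nat.factorization_eq_of_forall_dvd_coprime_le (Nat.mul_ne_zero (by omega) (by omega))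
    hn'dvd hn'cop hn'max hqp hqk]
  exact dvd_factorization_mul_natDegree hqp hk hkq (by omega) (hqn'.trans hn'dvd) ha0
    (fun j hj h => (ha j hj q hqp h).not_gt hkq) hg hgf
end

section
/- Let n, k be integers with 3 ≤ k ≤ n-1 and n coprime-part condition as follows: with n' the largest divisor of n(n-k) coprime to k! and d = gcd(k, {ν_p(n') : p | n'}), assume d = 1. Then for every choice of nonzero integers a_0, …, a_k each having all prime factors ≤ k, the polynomial F_{n,k}(x) = ∑_{j=0}^{k} a_j c_j x^j with c_j = (-1)^{k-j} C(n,j) C(n-j-1,k-j) is irreducible over ℚ. -/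
/-!
Fix a prime `p ∣ n'`. Then `p > k`, `p` divides exactly one of `n`, `n - k`, and
`v_p(n') = v_p(n (n - k))`. Since `(n - j) c_j = ± C(k, j) (n - k) C(n, k)` and `p` divides none
of `n - 1, …, n - k + 1`, the `p`-adic Newton polygon of `F_{n,k}` is a single segment from
`(0, v_p(c_0))` to `(k, v_p(c_k))`, of slope `± v_p(n') / k`. Multiplicativity of the Gauss norm
`|f|_c = max |f_i|_p c^i` with `c = p^slope` shows that every factor `G` of `F_{n,k}` again has a
one-segment Newton polygon of that slope, so `k ∣ v_p(n') deg G`. As `gcd(k, v_p(n') : p ∣ n') = 1`,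
`k ∣ deg G`.
-/

open Polynomial Finset

namespace Polynomial

theorem gaussNorm_le_of_forall {R F : Type*} [Semiring R] [FunLike F R ℝ] {v : F} {c B : ℝ}
    {P : R[X]} (hB : 0 ≤ B) (h : ∀ i, v (P.coeff i) * c ^ i ≤ B) : P.gaussNorm v c ≤ B := by
  unfold gaussNorm
  split_ifs
  · exact Finset.sup'_le _ _ fun i _ => h i
  · exact hB

theorem gaussNorm_eq_coeff_zero_and_leadingCoeff_of_dvd {R : Type*} [Ring R] [NoZeroDivisors R]
    {v : AbsoluteValue R ℝ} (hna : IsNonarchimedean v) {c : ℝ} (hc : 0 < c) {F G : R[X]}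
    (hG : G ∣ F) (hF : F ≠ 0) (hF0 : F.gaussNorm v c = v (F.coeff 0))
    (hFlead : F.gaussNorm v c = v F.leadingCoeff * c ^ F.natDegree) :
    G.gaussNorm v c = v (G.coeff 0) ∧
      G.gaussNorm v c = v G.leadingCoeff * c ^ G.natDegree := by
  obtain ⟨H, rfl⟩ := hG
  obtain ⟨hG, hH⟩ := mul_ne_zero_iff.mp hF
  have hnorm := gaussNorm_mul hna hc G H
  have coeff_zero_le (P : R[X]) : v (P.coeff 0) ≤ P.gaussNorm v c := by
    simpa using le_gaussNorm v P hc.le 0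
  have leadingCoeff_le (P : R[X]) : v P.leadingCoeff * c ^ P.natDegree ≤ P.gaussNorm v c :=
    le_gaussNorm v P hc.le _
  have leadingCoeff_pos {P : R[X]} (hP : P ≠ 0) : 0 < v P.leadingCoeff * c ^ P.natDegree :=
    mul_pos (v.pos (leadingCoeff_ne_zero.mpr hP)) (pow_pos hc _)
  have hH_pos : 0 < H.gaussNorm v c := (leadingCoeff_pos hH).trans_le (leadingCoeff_le H)
  have hG0_pos : 0 < v (G.coeff 0) := by
    have := hF0 ▸ hFlead ▸ leadingCoeff_pos hF
    rw [mul_coeff_zero, map_mul] at this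
    exact pos_of_mul_pos_left this (v.nonneg _)
  rw [mul_coeff_zero, map_mul] at hF0
  rw [leadingCoeff_mul, natDegree_mul hG hH, map_mul, pow_add, mul_mul_mul_comm] at hFlead
  exact ⟨((mul_eq_mul_iff_eq_and_eq_of_pos (coeff_zero_le G) (coeff_zero_le H) hG0_pos hH_pos).mp
      (hF0.symm.trans hnorm)).1.symm,
    ((mul_eq_mul_iff_eq_and_eq_of_pos (leadingCoeff_le G) (leadingCoeff_le H)
      (leadingCoeff_pos hG) hH_pos).mp (hFlead.symm.trans hnorm)).1.symm⟩

theorem coeff_sum_range_C_mul_X_pow {R : Type*} [Semiring R] (e : ℕ → R) (k i : ℕ) :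
    (∑ j ∈ range (k + 1), C (e j) * X ^ j).coeff i = if i ≤ k then e i else 0 := by
  simp [finsetSum_coeff]

theorem natDegree_sum_range_C_mul_X_pow {R : Type*} [Semiring R] {e : ℕ → R} {k : ℕ}
    (hk : e k ≠ 0) : (∑ j ∈ range (k + 1), C (e j) * X ^ j).natDegree = k := by
  refine natDegree_eq_of_le_of_coeff_ne_zero (natDegree_le_iff_coeff_eq_zero.mpr fun i hi => ?_) ?_
  · simp [not_le.mpr hi]
  · simpa [coeff_sum_range_C_mul_X_pow]

theorem irreducible_of_natDegree_dvd {K : Type*} [Field K] {F : K[X]} (hF : 0 < F.natDegree)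
    (h : ∀ G, G ∣ F → F.natDegree ∣ G.natDegree) : Irreducible F := by
  have isUnit_of {P : K[X]} (hP : P ≠ 0) (h0 : P.natDegree = 0) : IsUnit P :=
    isUnit_iff_degree_eq_zero.mpr (by rw [degree_eq_natDegree hP, h0]; rfl)
  refine ⟨fun hu => by simp [natDegree_eq_zero_of_isUnit hu] at hF, fun G H hGH => ?_⟩
  obtain ⟨hG, hH⟩ := mul_ne_zero_iff.mp (hGH ▸ ne_zero_of_natDegree_gt hF)
  have hdeg : G.natDegree + H.natDegree = F.natDegree := by rw [hGH, natDegree_mul hG hH]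
  rcases Nat.eq_zero_or_pos G.natDegree with hG0 | hG0
  · exact .inl (isUnit_of hG hG0)
  · have := Nat.le_of_dvd hG0 (h G (Dvd.intro H hGH.symm))
    exact .inr (isUnit_of hH (by omega))

end Polynomial

namespace Rat.AbsoluteValue

variable {p : ℕ} [Fact p.Prime]

theorem isNonarchimedean_padic : IsNonarchimedean (padic p) := fun x y => by
  simpa using (Rat.cast_le (K := ℝ)).mpr (padicNorm.nonarchimedean (p := p) (q := x) (r := y))

theorem padic_eq_rpow {x : ℚ} (hx : x ≠ 0) : padic p x = (p : ℝ) ^ (-(padicValRat p x : ℝ)) := by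
  rw [padic_eq_padicNorm, padicNorm.eq_zpow_of_nonzero hx, ← Int.cast_neg, Real.rpow_intCast]
  push_cast
  rfl

end Rat.AbsoluteValue

namespace Polynomial

open Rat.AbsoluteValue in
theorem natDegree_dvd_padicValRat_sub_mul_natDegree {p : ℕ} [Fact p.Prime] {F G : ℚ[X]}
    (hG : G ∣ F) (hF0 : F.coeff 0 ≠ 0)
    (hsegment : ∀ i ∈ F.support, ((F.natDegree : ℤ) - i) * padicValRat p (F.coeff 0) +
      i * padicValRat p F.leadingCoeff ≤ F.natDegree * padicValRat p (F.coeff i)) :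
    (F.natDegree : ℤ) ∣
      (padicValRat p F.leadingCoeff - padicValRat p (F.coeff 0)) * G.natDegree := by
  have hF : F ≠ 0 := fun h => hF0 (by simp [h])
  have hGF : G.natDegree ≤ F.natDegree := natDegree_le_of_dvd hG hF
  rcases Nat.eq_zero_or_pos F.natDegree with hN0 | hNpos
  · simp [show G.natDegree = 0 by omega]
  set N := F.natDegree
  set e : ℤ := padicValRat p F.leadingCoeff - padicValRat p (F.coeff 0) with he
  have hp : (1 : ℝ) < p := by exact_mod_cast (Fact.out : p.Prime).one_lt
  have hNr : (0 : ℝ) < N := by exact_mod_cast hNpos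
  -- chosen so that `|F_0|_p = |F_N|_p c^N`
  set c : ℝ := (p : ℝ) ^ ((e : ℝ) / N) with hc
  have hc_pos : 0 < c := by positivity
  have hterm {x : ℚ} (hx : x ≠ 0) (i : ℕ) :
      padic p x * c ^ i = (p : ℝ) ^ (-(padicValRat p x : ℝ) + i * ((e : ℝ) / N)) := by
    rw [padic_eq_rpow hx, hc, ← Real.rpow_natCast, ← Real.rpow_mul (by positivity),
      mul_comm (e / N : ℝ), Real.rpow_add (by positivity)]
  have hnorm0 : F.gaussNorm (padic p) c = padic p (F.coeff 0) := by
    refine le_antisymm (gaussNorm_le_of_forall ((padic p).nonneg _) fun i => ?_)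
      (by simpa using le_gaussNorm (padic p) F hc_pos.le 0)
    by_cases hi : F.coeff i = 0
    · rw [hi, map_zero, zero_mul]
      exact (padic p).nonneg _
    rw [hterm hi, padic_eq_rpow hF0, Real.rpow_le_rpow_left_iff hp]
    have key : ((i * e : ℤ) : ℝ) ≤
        ((N * (padicValRat p (F.coeff i) - padicValRat p (F.coeff 0)) : ℤ) : ℝ) := by
      have := hsegment i (mem_support_iff.mpr hi)
      exact_mod_cast (by rw [he]; linarith)
    push_cast at key
    have : (i : ℝ) * (e / N) ≤ padicValRat p (F.coeff i) - padicValRat p (F.coeff 0) := by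
      rw [← mul_div_assoc, div_le_iff₀ hNr]
      linarith
    linarith
  have hnormN : F.gaussNorm (padic p) c = padic p F.leadingCoeff * c ^ N := by
    rw [hnorm0, hterm (leadingCoeff_ne_zero.mpr hF), padic_eq_rpow hF0]
    congr 1
    field_simp
    rw [he]
    push_cast
    ring
  obtain ⟨hG0, hGlead⟩ := gaussNorm_eq_coeff_zero_and_leadingCoeff_of_dvd isNonarchimedean_padic
    hc_pos hG hF hnorm0 hnormN
  have hG_ne : G ≠ 0 := ne_zero_of_dvd_ne_zero hF hG
  have hG0_ne : G.coeff 0 ≠ 0 := by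
    obtain ⟨H, rfl⟩ := hG
    exact left_ne_zero_of_mul (mul_coeff_zero G H ▸ hF0)
  rw [hGlead, hterm (leadingCoeff_ne_zero.mpr hG_ne), padic_eq_rpow hG0_ne,
    Real.rpow_right_inj (by positivity) hp.ne'] at hG0
  refine ⟨padicValRat p G.leadingCoeff - padicValRat p (G.coeff 0), ?_⟩
  field_simp at hG0
  have : ((e * G.natDegree : ℤ) : ℝ) =
      ((N * (padicValRat p G.leadingCoeff - padicValRat p (G.coeff 0)) : ℤ) : ℝ) := by
    push_cast
    linarith
  exact_mod_cast this

end Polynomial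

namespace Nat

theorem factorization_eq_of_forall_coprime_dvd_le {N m n' p : ℕ} (hN : N ≠ 0) (hdvd : n' ∣ N)
    (hcop : n'.Coprime m) (hmax : ∀ d, d ∣ N → d.Coprime m → d ≤ n') (hp : p.Prime)
    (hpm : ¬ p ∣ m) : n'.factorization p = N.factorization p := by
  have hn' : n' ≠ 0 := ne_zero_of_dvd_ne_zero hN hdvd
  set q := p ^ N.factorization p
  have hq : q ∣ N := ordProj_dvd N p
  have hqm : q.Coprime m := ((Nat.Prime.coprime_iff_not_dvd hp).mpr hpm).pow_left _
  have hlcm : n'.lcm q = n' := by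
    refine le_antisymm (hmax _ (Nat.lcm_dvd hdvd hq) ?_) (Nat.le_of_dvd ?_ (Nat.dvd_lcm_left _ _))
    · exact Nat.Coprime.coprime_dvd_left (Nat.lcm_dvd_mul n' q) (Nat.Coprime.mul_left hcop hqm)
    · exact Nat.pos_of_ne_zero (Nat.lcm_ne_zero hn' (pow_ne_zero _ hp.ne_zero))
  refine le_antisymm ((factorization_le_iff_dvd hn' hN).mpr hdvd p) ?_
  exact (hp.pow_dvd_iff_le_factorization hn').mp (hlcm ▸ Nat.dvd_lcm_right n' q)

theorem sub_mul_choose_mul_choose {n k j : ℕ} (hj : j ≤ k) (hk : k < n) :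
    (n - j) * (n.choose j * (n - j - 1).choose (k - j)) = k.choose j * ((n - k) * n.choose k) := by
  have h := choose_mul_succ_eq (n - j - 1) (k - j)
  rw [show n - j - 1 + 1 = n - j by omega, show n - j - (k - j) = n - k by omega] at h
  calc (n - j) * (n.choose j * (n - j - 1).choose (k - j))
      = n.choose j * ((n - j - 1).choose (k - j) * (n - j)) := by ring
    _ = n.choose j * (n - j).choose (k - j) * (n - k) := by rw [h]; ring
    _ = k.choose j * ((n - k) * n.choose k) := by rw [← choose_mul hj]; ring

end Nat

theorem padicValNat_choose_mul_choose_add {p n k j : ℕ} [hp : Fact p.Prime] (hpk : k < p)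
    (hj : j ≤ k) (hk : k < n) :
    padicValNat p (n.choose j * (n - j - 1).choose (k - j)) + padicValNat p (n - j) =
      padicValNat p ((n - k) * n.choose k) := by
  have h := congrArg (padicValNat p) (Nat.sub_mul_choose_mul_choose hj hk)
  have hkj : padicValNat p (k.choose j) = 0 := padicValNat.eq_zero_of_not_dvd
    ((Nat.Prime.coprime_iff_not_dvd hp.out).mp (hp.out.coprime_choose_of_lt hpk hj))
  have hchoose {a b : ℕ} (hab : b ≤ a) : a.choose b ≠ 0 := (Nat.choose_pos hab).ne'
  rwa [padicValNat.mul (by omega) (mul_ne_zero (hchoose (by omega)) (hchoose (by omega))),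
    padicValNat.mul (hchoose hj) (mul_ne_zero (by omega) (hchoose hk.le)), hkj, zero_add,
    add_comm] at h

/-- `fnkCoeff n k a j` is `a_j c_j`, and `fnk n k a` is the polynomial `F_{n,k}`. -/
def fnkCoeff (n k : ℕ) (a : ℕ → ℤ) (j : ℕ) : ℚ :=
  (a j : ℚ) * ((-1 : ℚ) ^ (k - j) * (n.choose j : ℚ) * ((n - j - 1).choose (k - j) : ℚ))

theorem padicValRat_fnkCoeff {p n k j : ℕ} [hp : Fact p.Prime] {a : ℕ → ℤ} (hpk : k < p)
    (hj : j ≤ k) (hk : k < n) (haj : a j ≠ 0) (ha : ∀ q : ℕ, q.Prime → (q : ℤ) ∣ a j → q ≤ k) :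
    padicValRat p (fnkCoeff n k a j) =
      padicValNat p ((n - k) * n.choose k) - padicValNat p (n - j) := by
  have hsplit : fnkCoeff n k a j = ((a j * (-1) ^ (k - j) : ℤ) : ℚ) *
      ((n.choose j * (n - j - 1).choose (k - j) : ℕ) : ℚ) := by
    simp only [fnkCoeff]
    push_cast
    ring
  have hunit : IsUnit ((-1 : ℤ) ^ (k - j)) := isUnit_one.neg.pow _
  have hint : padicValInt p (a j * (-1) ^ (k - j)) = 0 := by
    refine padicValInt.eq_zero_of_not_dvd fun hdvd => ?_
    have := ha p hp.out ((hunit.dvd_mul_right).mp hdvd)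
    omega
  have hchoose : n.choose j * (n - j - 1).choose (k - j) ≠ 0 :=
    mul_ne_zero (Nat.choose_pos (by omega)).ne' (Nat.choose_pos (by omega)).ne'
  rw [hsplit, padicValRat.mul (by exact_mod_cast mul_ne_zero haj hunit.ne_zero)
      (by exact_mod_cast hchoose),
    padicValRat.of_int, padicValRat.of_nat, hint, ← padicValNat_choose_mul_choose_add hpk hj hk]
  push_cast
  ring

theorem fnkCoeff_ne_zero {n k j : ℕ} {a : ℕ → ℤ} (hj : j ≤ k) (hk : k < n) (haj : a j ≠ 0) :
    fnkCoeff n k a j ≠ 0 := by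
  have h1 : (n.choose j : ℚ) ≠ 0 := by exact_mod_cast (Nat.choose_pos (by omega)).ne'
  have h2 : ((n - j - 1).choose (k - j) : ℚ) ≠ 0 := by
    exact_mod_cast (Nat.choose_pos (by omega)).ne'
  simp [fnkCoeff, haj, h1, h2]

noncomputable def fnk (n k : ℕ) (a : ℕ → ℤ) : ℚ[X] :=
  ∑ j ∈ range (k + 1), C (fnkCoeff n k a j) * X ^ j

theorem padicValNat_sub_eq_zero_of_dvd_mul_sub {p n k i : ℕ} (hp : p.Prime) (hpk : k < p)
    (hpn : p ∣ n * (n - k)) (hi : 0 < i) (hik : i < k) (hkn : k < n) :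
    padicValNat p (n - i) = 0 := by
  refine padicValNat.eq_zero_of_not_dvd fun hpi => ?_
  rcases hp.dvd_mul.mp hpn with h | h
  · have := Nat.le_of_dvd hi (Nat.sub_sub_self (n := n) (m := i) (by omega) ▸ Nat.dvd_sub h hpi)
    omega
  · have := Nat.le_of_dvd (by omega) (show n - i - (n - k) = k - i by omega ▸ Nat.dvd_sub hpi h)
    omega

theorem dvd_padicValNat_mul_natDegree_of_dvd_fnk {p n k : ℕ} [hp : Fact p.Prime] {a : ℕ → ℤ}
    (hk : 0 < k) (hkn : k < n) (hpk : k < p) (hpn : p ∣ n * (n - k))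
    (ha0 : ∀ j ≤ k, a j ≠ 0) (ha : ∀ j ≤ k, ∀ q : ℕ, q.Prime → (q : ℤ) ∣ a j → q ≤ k)
    {G : ℚ[X]} (hG : G ∣ fnk n k a) :
    k ∣ padicValNat p (n * (n - k)) * G.natDegree := by
  have hdeg : (fnk n k a).natDegree = k :=
    natDegree_sum_range_C_mul_X_pow (fnkCoeff_ne_zero le_rfl hkn (ha0 k le_rfl))
  have hval (j : ℕ) (hj : j ≤ k) : padicValRat p ((fnk n k a).coeff j) =
      padicValNat p ((n - k) * n.choose k) - padicValNat p (n - j) := by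
    rw [fnk, coeff_sum_range_C_mul_X_pow, if_pos hj,
      padicValRat_fnkCoeff hpk hj hkn (ha0 j hj) (ha j hj)]
  have h0 : (fnk n k a).coeff 0 ≠ 0 := by
    rw [fnk, coeff_sum_range_C_mul_X_pow, if_pos (Nat.zero_le k)]
    exact fnkCoeff_ne_zero (Nat.zero_le k) hkn (ha0 0 (Nat.zero_le k))
  have key := natDegree_dvd_padicValRat_sub_mul_natDegree (p := p) hG h0 fun i hi => by
    have hik : i ≤ k := hdeg ▸ le_natDegree_of_mem_supp i hi
    rw [leadingCoeff, hdeg, hval i hik, hval k le_rfl, hval 0 (Nat.zero_le k)]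
    rcases Nat.eq_zero_or_pos i with rfl | hi0
    · simp
    rcases hik.eq_or_lt with rfl | hik
    · simp
    rw [padicValNat_sub_eq_zero_of_dvd_mul_sub hp.out hpk hpn hi0 hik hkn]
    have : (0 : ℤ) ≤ (k - i) * padicValNat p (n - 0) + i * padicValNat p (n - k) := by
      have : (i : ℤ) ≤ k := by exact_mod_cast hik.le
      positivity
    rw [Nat.cast_zero]
    linarith
  rw [leadingCoeff, hdeg, hval k le_rfl, hval 0 (Nat.zero_le k), Nat.sub_zero,
    sub_sub_sub_cancel_left] at key
  have hcoprime : ¬ p ∣ n ∨ ¬ p ∣ n - k := by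
    by_contra! h
    have := Nat.le_of_dvd hk (Nat.sub_sub_self hkn.le ▸ Nat.dvd_sub h.1 h.2)
    omega
  rw [padicValNat.mul (by omega) (by omega), ← Int.natCast_dvd_natCast, Nat.cast_mul,
    Nat.cast_add]
  rcases hcoprime with h | h <;> rw [padicValNat.eq_zero_of_not_dvd h, Nat.cast_zero] at key ⊢
  · rwa [zero_add, ← dvd_neg, ← neg_mul, ← zero_sub]
  · rwa [add_zero, ← sub_zero (padicValNat p n : ℤ)]

open Polynomial in
theorem irreducible_of_d_eq_one (n k : ℕ) (hk : 3 ≤ k) (hkn : k ≤ n - 1)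
    (n' : ℕ) (hn'dvd : n' ∣ n * (n - k)) (hn'cop : Nat.Coprime n' (Nat.factorial k))
    (hn'max : ∀ m : ℕ, m ∣ n * (n - k) → Nat.Coprime m (Nat.factorial k) → m ≤ n')
    (hd : Nat.gcd k (n'.primeFactors.gcd fun p => n'.factorization p) = 1)
    (a : ℕ → ℤ) (ha0 : ∀ j ≤ k, a j ≠ 0)
    (ha : ∀ j ≤ k, ∀ q : ℕ, q.Prime → (q : ℤ) ∣ a j → q ≤ k) :
    Irreducible (∑ j ∈ Finset.range (k + 1),
      C ((a j : ℚ) * ((-1 : ℚ) ^ (k - j) * (n.choose j : ℚ) *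
        ((n - j - 1).choose (k - j) : ℚ))) * X ^ j) := by
  have hkn_lt : k < n := by omega
  have hdeg : (fnk n k a).natDegree = k :=
    natDegree_sum_range_C_mul_X_pow (fnkCoeff_ne_zero le_rfl hkn_lt (ha0 k le_rfl))
  refine irreducible_of_natDegree_dvd (F := fnk n k a) (by omega) fun G hG => ?_
  rw [hdeg]
  have hprime (p : ℕ) (hp : p ∈ n'.primeFactors) : k ∣ n'.factorization p * G.natDegree := by
    have hpp := Nat.prime_of_mem_primeFactors hp
    have hpn' := Nat.dvd_of_mem_primeFactors hp
    have hpk : ¬ p ∣ k.factorial := fun h =>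
      hpp.one_lt.ne' (Nat.eq_one_of_dvd_coprimes hn'cop hpn' h)
    have := Fact.mk hpp
    rw [Nat.factorization_eq_of_forall_coprime_dvd_le (Nat.mul_ne_zero (by omega) (by omega))
      hn'dvd hn'cop hn'max hpp hpk, Nat.factorization_def _ hpp]
    exact dvd_padicValNat_mul_natDegree_of_dvd_fnk (by omega) hkn_lt
      (not_le.mp (mt hpp.dvd_factorial.mpr hpk)) (hpn'.trans hn'dvd) ha0 ha hG
  have hgcd := Finset.dvd_gcd hprime
  rw [Finset.gcd_mul_right, normalize_eq] at hgcd
  exact Nat.Coprime.dvd_of_dvd_mul_left hd hgcd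
end
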